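/- With A(n) := ∑_{j=1}^{n} ((−1)^j / j!)·M(n+j, j), where M(n+j, j) counts as above (M(n+1,1) = 1), one has the recursion A(n) = −n·A(n−1) for n ≥ 2, and consequently A(n) = (−1)^n n!. -/

import Mathlib

/-!
Write `F = exp x - 1 - x`. Expanding `F ^ t` multinomially gives `M(N, t) = N! [x^N] F ^ t`, and
differentiating `F ^ (k + 1)` with `F' = F + x` yields
`M(m + 2, k + 1) = (k + 1) (M(m + 1, k + 1) + (m + 1) M(m, k))`.
For the summands `a(n, j) = (-1)^j / j! · M(n + j, j)` of `A(n)` this becomes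
`a(n + 1, k + 1) = (k + 1) a(n, k + 1) - (n + k + 1) a(n, k)`. Summing over `k`, the first part is
`∑ j a(n, j) · j` after an index shift and cancels the `j`-part of the second, leaving
`A(n + 1) = -(n + 1) A(n)`.
-/

/-- `M N t` = ∑ over `(n₁,…,n_t)` with `n₁+⋯+n_t = N`, all `nᵢ ≥ 2`, of `N!/(n₁!⋯n_t!)`.
(For `t = 1` and `N ≥ 2` this equals `1`, matching the convention `M(N,1) = 1`.) -/
def Msum (N t : ℕ) : ℕ :=
  ∑ c ∈ (Finset.Nat.antidiagonalTuple t N).filter (fun c => ∀ i, 2 ≤ c i),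
    Nat.multinomial Finset.univ c

/-- `A n = ∑_{j=1}^{n} ((−1)^j / j!)·M(n+j, j)`. -/
def Aseq (n : ℕ) : ℚ :=
  ∑ j ∈ Finset.Icc 1 n, ((-1 : ℚ) ^ j / (j.factorial : ℚ)) * (Msum (n + j) j : ℚ)

open PowerSeries Finset Nat
open scoped PowerSeries

theorem Finset.sum_finsuppAntidiag_eq_sum_piAntidiag {ι μ M : Type*} [DecidableEq ι]
    [AddCommMonoid μ] [HasAntidiagonal μ] [DecidableEq μ] [AddCommMonoid M]
    (s : Finset ι) (n : μ) (F : (ι → μ) → M) :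
    ∑ l ∈ finsuppAntidiag s n, F l = ∑ f ∈ piAntidiag s n, F f := by
  rw [finsuppAntidiag, sum_map, ← sum_attach (piAntidiag s n)]
  rfl

theorem PowerSeries.coeff_pow_eq_sum_antidiagonalTuple {R : Type*} [CommSemiring R]
    (f : R⟦X⟧) (t N : ℕ) :
    coeff N (f ^ t) = ∑ c ∈ Nat.antidiagonalTuple t N, ∏ i : Fin t, coeff (c i) f := by
  rw [← Fin.prod_const, coeff_prod,
    sum_finsuppAntidiag_eq_sum_piAntidiag _ _ (fun c => ∏ i : Fin t, coeff (c i) f),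
    piAntidiag_univ_fin_eq_antidiagonalTuple]

noncomputable def expSubOneSubX : ℚ⟦X⟧ := exp ℚ - 1 - X

theorem coeff_expSubOneSubX (n : ℕ) :
    coeff n expSubOneSubX = if 2 ≤ n then ((n ! : ℕ) : ℚ)⁻¹ else 0 := by
  rcases n with _ | _ | n <;> simp [expSubOneSubX, coeff_one, coeff_X]

theorem derivative_expSubOneSubX : derivative ℚ expSubOneSubX = expSubOneSubX + X := by
  simp [expSubOneSubX, derivative_exp]

theorem Msum_eq_factorial_mul_coeff (N t : ℕ) :
    (Msum N t : ℚ) = N ! * coeff N (expSubOneSubX ^ t) := by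
  rw [coeff_pow_eq_sum_antidiagonalTuple, mul_sum, Msum, sum_filter, Nat.cast_sum]
  refine sum_congr rfl fun c hc => ?_
  rw [Nat.mem_antidiagonalTuple] at hc
  split_ifs with h
  · have hspec := Nat.multinomial_spec univ c
    rw [hc] at hspec
    simp_rw [coeff_expSubOneSubX, if_pos (h _), ← hspec]
    push_cast
    rw [prod_inv_distrib]
    field_simp
  · obtain ⟨i, hi⟩ := not_forall.mp h
    rw [prod_eq_zero (mem_univ i) (by rw [coeff_expSubOneSubX, if_neg (by omega)]), mul_zero,
      Nat.cast_zero]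

theorem Msum_add_two_succ (m k : ℕ) :
    Msum (m + 2) (k + 1) = (k + 1) * (Msum (m + 1) (k + 1) + (m + 1) * Msum m k) := by
  have hderiv : derivative ℚ (expSubOneSubX ^ (k + 1)) =
      (k + 1 : ℚ) • (expSubOneSubX ^ (k + 1) + X * expSubOneSubX ^ k) := by
    rw [Derivation.leibniz_pow, derivative_expSubOneSubX, Nat.add_sub_cancel,
      ← Nat.cast_smul_eq_nsmul ℚ, smul_eq_mul, pow_succ]
    push_cast
    congr 1
    ring
  have hcoeff := congrArg (coeff (m + 1)) hderiv
  rw [coeff_derivative, LinearMap.map_smul, map_add, coeff_succ_X_mul, smul_eq_mul] at hcoeff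
  qify
  rw [Msum_eq_factorial_mul_coeff, Msum_eq_factorial_mul_coeff, Msum_eq_factorial_mul_coeff,
    factorial_succ (m + 1), factorial_succ m]
  push_cast at hcoeff ⊢
  linear_combination ((m + 1 : ℚ) * m !) * hcoeff

theorem Msum_eq_zero_of_lt {N t : ℕ} (h : N < 2 * t) : Msum N t = 0 := by
  refine sum_eq_zero fun c hc => absurd ?_ h.not_ge
  rw [mem_filter, Nat.mem_antidiagonalTuple] at hc
  calc 2 * t = ∑ _i : Fin t, 2 := by simp [mul_comm]
    _ ≤ ∑ i : Fin t, c i := sum_le_sum fun i _ => hc.2 i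
    _ = N := hc.1

theorem Msum_zero_right {N : ℕ} (h : N ≠ 0) : Msum N 0 = 0 := by
  obtain ⟨n, rfl⟩ := Nat.exists_eq_succ_of_ne_zero h
  simp [Msum]

def Aterm (n j : ℕ) : ℚ := (-1) ^ j / j ! * Msum (n + j) j

theorem Aterm_succ_succ (n k : ℕ) :
    Aterm (n + 1) (k + 1) = (k + 1) * Aterm n (k + 1) - (n + k + 1) * Aterm n k := by
  rw [Aterm, Aterm, Aterm, show n + 1 + (k + 1) = n + k + 2 by ring, ← add_assoc n k 1,
    Msum_add_two_succ, factorial_succ]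
  push_cast
  field_simp
  ring

theorem Aterm_eq_zero_of_lt {n j : ℕ} (h : n < j) : Aterm n j = 0 := by
  rw [Aterm, Msum_eq_zero_of_lt (by omega), Nat.cast_zero, mul_zero]

theorem Aterm_zero_right {n : ℕ} (h : n ≠ 0) : Aterm n 0 = 0 := by
  rw [Aterm, add_zero, Msum_zero_right h, Nat.cast_zero, mul_zero]

theorem Aseq_eq_sum_range {n K : ℕ} (hn : n ≠ 0) (hK : n ≤ K) :
    Aseq n = ∑ j ∈ range (K + 1), Aterm n j := by
  refine sum_subset (fun j hj => ?_) fun j _ hj => ?_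
  · rw [mem_Icc] at hj
    rw [mem_range]
    omega
  · rw [mem_Icc, not_and_or, not_le, not_le, Nat.lt_one_iff] at hj
    rcases hj with rfl | hj
    · exact Aterm_zero_right hn
    · exact Aterm_eq_zero_of_lt hj

theorem Aseq_succ {m : ℕ} (hm : m ≠ 0) : Aseq (m + 1) = -(m + 1) * Aseq m := by
  have hshift : ∑ k ∈ range (m + 1), (k + 1 : ℚ) * Aterm m (k + 1) =
      ∑ k ∈ range (m + 1), (k : ℚ) * Aterm m k := by
    have := sum_range_succ' (fun k => (k : ℚ) * Aterm m k) (m + 1)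
    rw [sum_range_succ, Aterm_eq_zero_of_lt (Nat.lt_succ_self m)] at this
    simpa using this.symm
  rw [Aseq_eq_sum_range (Nat.succ_ne_zero m) le_rfl, sum_range_succ',
    Aterm_zero_right (Nat.succ_ne_zero m), add_zero, Aseq_eq_sum_range hm le_rfl, mul_sum]
  simp_rw [Aterm_succ_succ]
  rw [sum_sub_distrib, hshift, ← sum_sub_distrib]
  refine sum_congr rfl fun k _ => ?_
  ring

theorem Aseq_one : Aseq 1 = -1 := by
  simp [Aseq, show Msum 2 1 = 1 by decide]

theorem stmt_10 :
    (∀ n : ℕ, 2 ≤ n → Aseq n = -(n : ℚ) * Aseq (n - 1)) ∧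
      (∀ n : ℕ, 1 ≤ n → Aseq n = (-1 : ℚ) ^ n * (n.factorial : ℚ)) := by
  refine ⟨fun n hn => ?_, fun n hn => ?_⟩
  · obtain ⟨m, rfl⟩ : ∃ m, n = m + 1 := ⟨n - 1, by omega⟩
    rw [Nat.add_sub_cancel, Aseq_succ (by omega), Nat.cast_succ]
  · induction n, hn using Nat.le_induction with
    | base => simp [Aseq_one]
    | succ n hn ih =>
      rw [Aseq_succ (by omega), ih, factorial_succ]
      push_cast
      ring
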